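/- Let X be uniformly distributed on (0,1] and let t(x) = i for x ∈ [1/(i+1), 1/i), i ≥ 1, so that P(t(X) = i) = 1/(i(i+1)). Then the Shannon mutual information I_Sh(X, t(X)) equals the entropy Σ_{i=1}^∞ ln(i(i+1))/(i(i+1)) of the pushforward law, this series converges, and its sum is at most ln(2)/2 + 2; in contrast, the chi-squared mutual information I_{χ²}(X, t(X)) is infinite. -/

import Mathlib

/-!
On `(0, 1]`, `t` agrees almost everywhere with `x ↦ ⌈1/x⌉ - 1`, whose fibre over `i ≥ 1` is
`[1/(i+1), 1/i)`; this gives the atoms `1/(i(i+1))`. For a representation with countably many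
values, `∫ 1/ν({t x}) dμ = Σ_z ν({z})⁻¹ ν({z})` counts the atoms of `ν = t_* μ`, so `I_{χ²}` is the
number of atoms minus one, here `∞`. The entropy series is bounded by telescoping against
`Φ(x) = (2 ln x + 4 - 2 ln 2)/x`: since `ln(1 + 1/x) ≤ 1/x`, the term `ln(x(x+1))/(x(x+1))` is at
most `Φ(x) - Φ(x+1)` for `x ≥ 2`, and `Φ(2) = 2` bounds all terms but the first, `ln 2 / 2`.
-/

open MeasureTheory ENNReal

/-- χ²-mutual information `I_{χ²}(X, t(X)) = ∫ 1/ν({t x}) dμ(x) - 1` of a deterministic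
representation `t`, where `ν = t_* μ` (with the convention `1/0 = ∞`). -/
noncomputable def chiSqMIdet {X Z : Type*} [MeasurableSpace X] [MeasurableSpace Z]
    (μX : Measure X) (t : X → Z) : ℝ≥0∞ :=
  (∫⁻ x, ((μX.map t) {t x})⁻¹ ∂μX) - 1

section ChiSquared

variable {X Z : Type*} [MeasurableSpace X] [MeasurableSpace Z]

theorem chiSqMIdet_congr_ae {μ : Measure X} {t t' : X → Z} (h : t =ᵐ[μ] t') :
    chiSqMIdet μ t = chiSqMIdet μ t' := by
  rw [chiSqMIdet, chiSqMIdet, Measure.map_congr h]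
  congr 1
  exact lintegral_congr_ae (h.mono fun x hx => by simp only [hx])

theorem chiSqMIdet_eq_encard_sub_one [Countable Z] [MeasurableSingletonClass Z]
    (μ : Measure X) [IsFiniteMeasure μ] {t : X → Z} (ht : Measurable t) :
    chiSqMIdet μ t = ({z | μ.map t {z} ≠ 0}.encard : ℝ≥0∞) - 1 := by
  have hatom (z : Z) :
      ((μ.map t) {z})⁻¹ * (μ.map t) {z} = {z | μ.map t {z} ≠ 0}.indicator 1 z := by
    by_cases hz : μ.map t {z} = 0
    · simp [hz]
    · simp [hz, ENNReal.inv_mul_cancel hz (measure_ne_top _ _)]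
  rw [chiSqMIdet,
    ← lintegral_map (f := fun z => ((μ.map t) {z})⁻¹) (measurable_of_countable _) ht,
    lintegral_countable']
  simp only [hatom, ← tsum_subtype, Pi.one_apply, ENNReal.tsum_set_one]

end ChiSquared

theorem natCeil_inv_sub_one_eq_iff {x : ℝ} (hx : 0 < x) {i : ℕ} (hi : 0 < i) :
    ⌈x⁻¹⌉₊ - 1 = i ↔ x ∈ Set.Ico (((i : ℝ) + 1)⁻¹) ((i : ℝ)⁻¹) := by
  have hi' : (0 : ℝ) < i := by exact_mod_cast hi
  rw [show ⌈x⁻¹⌉₊ - 1 = i ↔ ⌈x⁻¹⌉₊ = i + 1 by omega, Nat.ceil_eq_iff (by omega)]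
  push_cast
  rw [Set.mem_Ico, inv_le_comm₀ (by positivity) hx, lt_inv_comm₀ hx hi', and_comm]

theorem preimage_natCeil_inv_sub_one {i : ℕ} (hi : 0 < i) :
    (fun x : ℝ => ⌈x⁻¹⌉₊ - 1) ⁻¹' {i} = Set.Ico (((i : ℝ) + 1)⁻¹) ((i : ℝ)⁻¹) := by
  ext x
  rcases le_or_gt x 0 with hx | hx
  · have hlow : ¬ ((i : ℝ) + 1)⁻¹ ≤ x := fun h => (lt_of_lt_of_le (by positivity) h).not_ge hx
    simp [Nat.ceil_eq_zero.mpr (inv_nonpos.mpr hx), hlow, hi.ne]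
  · exact natCeil_inv_sub_one_eq_iff hx hi

theorem one_le_natCeil_inv_sub_one {x : ℝ} (hx0 : 0 < x) (hx1 : x < 1) : 1 ≤ ⌈x⁻¹⌉₊ - 1 := by
  have : 1 < ⌈x⁻¹⌉₊ := Nat.lt_ceil.mpr (by simpa using (one_lt_inv₀ hx0).mpr hx1)
  omega

theorem ae_eq_natCeil_inv_sub_one {t : ℝ → ℕ}
    (hti : ∀ i : ℕ, 1 ≤ i → ∀ x ∈ Set.Ico (((i : ℝ) + 1)⁻¹) ((i : ℝ)⁻¹), t x = i) :
    t =ᵐ[volume.restrict (Set.Ioc (0 : ℝ) 1)] fun x => ⌈x⁻¹⌉₊ - 1 := by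
  rw [← Measure.restrict_congr_set Ioo_ae_eq_Ioc]
  refine ae_restrict_of_forall_mem measurableSet_Ioo fun x ⟨hx0, hx1⟩ => ?_
  have hj := one_le_natCeil_inv_sub_one hx0 hx1
  exact hti _ hj x ((natCeil_inv_sub_one_eq_iff hx0 hj).mp rfl)

theorem map_natCeil_inv_sub_one_singleton {i : ℕ} (hi : 0 < i) :
    ((volume.restrict (Set.Ioc (0 : ℝ) 1)).map fun x => ⌈x⁻¹⌉₊ - 1) {i} =
      ENNReal.ofReal (1 / (i * (i + 1))) := by
  have hi' : (0 : ℝ) < i := by exact_mod_cast hi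
  have hsub : Set.Ico (((i : ℝ) + 1)⁻¹) ((i : ℝ)⁻¹) ⊆ Set.Ioc 0 1 := fun x hx =>
    ⟨lt_of_lt_of_le (by positivity) hx.1,
      hx.2.le.trans (inv_le_one_of_one_le₀ (by exact_mod_cast hi))⟩
  rw [Measure.map_apply (by fun_prop) (measurableSet_singleton i), preimage_natCeil_inv_sub_one hi,
    Measure.restrict_apply measurableSet_Ico, Set.inter_eq_left.mpr hsub, Real.volume_Ico]
  congr 1
  field_simp
  ring

noncomputable def entropyTailBound (x : ℝ) : ℝ := (2 * Real.log x + 4 - 2 * Real.log 2) / x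

theorem entropyTailBound_nonneg {x : ℝ} (hx : 1 ≤ x) : 0 ≤ entropyTailBound x := by
  have := Real.log_two_lt_d9
  have := Real.log_nonneg hx
  unfold entropyTailBound
  apply div_nonneg <;> linarith

theorem log_mul_add_one_div_le_entropyTailBound_sub {x : ℝ} (hx : 2 ≤ x) :
    Real.log (x * (x + 1)) / (x * (x + 1)) ≤ entropyTailBound x - entropyTailBound (x + 1) := by
  have hx0 : 0 < x := by linarith
  have hx1 : 0 < x + 1 := by linarith
  have hgap : Real.log (x + 1) - Real.log x ≤ 1 / x := by
    have h := Real.log_le_sub_one_of_pos (show 0 < (x + 1) / x by positivity)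
    rw [Real.log_div hx1.ne' hx0.ne'] at h
    calc _ ≤ (x + 1) / x - 1 := h
      _ = 1 / x := by field_simp; ring
  have hslack : (2 * x + 1) * (Real.log (x + 1) - Real.log x) ≤ 4 - 2 * Real.log 2 := by
    have := Real.log_two_lt_d9
    have : 1 / x ≤ 1 / 2 := one_div_le_one_div_of_le (by norm_num) hx
    calc _ ≤ (2 * x + 1) * (1 / x) := by gcongr
      _ = 2 + 1 / x := by field_simp
      _ ≤ _ := by linarith
  have hdiff :
      entropyTailBound x - entropyTailBound (x + 1) - Real.log (x * (x + 1)) / (x * (x + 1)) =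
        (4 - 2 * Real.log 2 - (2 * x + 1) * (Real.log (x + 1) - Real.log x)) / (x * (x + 1)) := by
    rw [entropyTailBound, entropyTailBound, Real.log_mul hx0.ne' hx1.ne']
    field_simp
    ring
  rw [← sub_nonneg, hdiff]
  exact div_nonneg (by linarith) (by positivity)

theorem summable_and_tsum_le_of_le_sub_succ {f F : ℕ → ℝ} (hf : ∀ n, 0 ≤ f n) (hF : ∀ n, 0 ≤ F n)
    (h : ∀ n, f n ≤ F n - F (n + 1)) : Summable f ∧ ∑' n, f n ≤ F 0 := by
  have hsum (n : ℕ) : ∑ i ∈ Finset.range n, f i ≤ F 0 :=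
    calc ∑ i ∈ Finset.range n, f i ≤ ∑ i ∈ Finset.range n, (F i - F (i + 1)) :=
          Finset.sum_le_sum fun i _ => h i
      _ = F 0 - F n := Finset.sum_range_sub' F n
      _ ≤ F 0 := sub_le_self _ (hF n)
  exact ⟨summable_of_sum_range_le hf hsum, Real.tsum_le_of_sum_range_le hf hsum⟩

theorem entropyTailBound_two : entropyTailBound 2 = 2 := by
  rw [entropyTailBound]; ring

theorem summable_entropy_series_and_tsum_le :
    Summable (fun i : ℕ => Real.log ((i + 1) * (i + 2)) / ((i + 1) * (i + 2) : ℝ)) ∧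
      ∑' i : ℕ, Real.log ((i + 1) * (i + 2)) / ((i + 1) * (i + 2) : ℝ) ≤ Real.log 2 / 2 + 2 := by
  set f := fun i : ℕ => Real.log ((i + 1) * (i + 2)) / ((i + 1) * (i + 2) : ℝ) with hf_def
  have hf (i : ℕ) : 0 ≤ f i :=
    div_nonneg (Real.log_nonneg (by nlinarith [i.cast_nonneg (α := ℝ)])) (by positivity)
  have hstep (n : ℕ) :
      f (n + 1) ≤ entropyTailBound (n + 2) - entropyTailBound ((n + 1 : ℕ) + 2) := by
    convert log_mul_add_one_div_le_entropyTailBound_sub (x := n + 2)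
      (by linarith [n.cast_nonneg (α := ℝ)]) using 2 <;> push_cast <;> ring_nf
  obtain ⟨htail, htail_le⟩ := summable_and_tsum_le_of_le_sub_succ
    (F := fun n : ℕ => entropyTailBound (n + 2)) (fun n => hf (n + 1))
    (fun n => entropyTailBound_nonneg (by linarith [n.cast_nonneg (α := ℝ)])) hstep
  have hsum : Summable f := (summable_nat_add_iff 1).mp htail
  refine ⟨hsum, ?_⟩
  rw [hsum.tsum_eq_zero_add]
  simp only [Nat.cast_zero, zero_add, entropyTailBound_two] at htail_le
  have : f 0 = Real.log 2 / 2 := by norm_num [hf_def]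
  linarith

theorem statement17_general (t : ℝ → ℕ)
    (hti : ∀ i : ℕ, 1 ≤ i → ∀ x ∈ Set.Ico (((i : ℝ) + 1)⁻¹) ((i : ℝ)⁻¹), t x = i) :
    (∀ i : ℕ, 1 ≤ i →
        ((volume.restrict (Set.Ioc (0 : ℝ) 1)).map t) {i} =
          ENNReal.ofReal (1 / (i * (i + 1)))) ∧
      Summable (fun i : ℕ =>
        Real.log ((i + 1) * (i + 2)) / ((i + 1) * (i + 2))) ∧
      (∑' i : ℕ, Real.log ((i + 1) * (i + 2)) / ((i + 1) * (i + 2))) ≤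
        Real.log 2 / 2 + 2 ∧
      chiSqMIdet (volume.restrict (Set.Ioc (0 : ℝ) 1)) t = ⊤ := by
  have ht := ae_eq_natCeil_inv_sub_one hti
  have hatom (i : ℕ) (hi : 1 ≤ i) :
      ((volume.restrict (Set.Ioc (0 : ℝ) 1)).map t) {i} = ENNReal.ofReal (1 / (i * (i + 1))) := by
    rw [Measure.map_congr ht, map_natCeil_inv_sub_one_singleton hi]
  have hinf :
      {i | ((volume.restrict (Set.Ioc (0 : ℝ) 1)).map fun x => ⌈x⁻¹⌉₊ - 1) {i} ≠ 0}.Infinite :=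
    (Set.Ici_infinite 1).mono fun i (hi : 1 ≤ i) => by
      have : (0 : ℝ) < i := by exact_mod_cast hi
      simp only [Set.mem_ofPred_eq, map_natCeil_inv_sub_one_singleton hi, ne_eq,
        ENNReal.ofReal_eq_zero, not_le]
      positivity
  obtain ⟨hsum, hsum_le⟩ := summable_entropy_series_and_tsum_le
  refine ⟨hatom, hsum, hsum_le, ?_⟩
  rw [chiSqMIdet_congr_ae ht, chiSqMIdet_eq_encard_sub_one _ (by fun_prop), hinf.encard_eq,
    ENat.toENNReal_top, top_sub one_ne_top]

/-- For `X` uniform on `(0,1]` and `t(x) = i` on `[1/(i+1), 1/i)`: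
the pushforward law has atoms `P(t(X) = i) = 1/(i(i+1))`; the Shannon mutual
information `I_Sh(X, t(X))`, i.e. the entropy `Σ_{i≥1} ln(i(i+1))/(i(i+1))` of the
pushforward, is a convergent series with sum at most `ln(2)/2 + 2`; in contrast,
`I_{χ²}(X, t(X)) = ∞`. -/
theorem statement17 (t : ℝ → ℕ) (ht : Measurable t)
    (hti : ∀ i : ℕ, 1 ≤ i → ∀ x ∈ Set.Ico (((i : ℝ) + 1)⁻¹) ((i : ℝ)⁻¹), t x = i) :
    (∀ i : ℕ, 1 ≤ i →
        ((volume.restrict (Set.Ioc (0 : ℝ) 1)).map t) {i} =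
          ENNReal.ofReal (1 / (i * (i + 1)))) ∧
      Summable (fun i : ℕ =>
        Real.log ((i + 1) * (i + 2)) / ((i + 1) * (i + 2))) ∧
      (∑' i : ℕ, Real.log ((i + 1) * (i + 2)) / ((i + 1) * (i + 2))) ≤
        Real.log 2 / 2 + 2 ∧
      chiSqMIdet (volume.restrict (Set.Ioc (0 : ℝ) 1)) t = ⊤ :=
  statement17_general t hti
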